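/- Let z = τ(g(f^ω(0))). If u is a finite factor of z, then the sister of u (the word obtained from u by exchanging the letters 1 and 2) is also a factor of z. -/

import Mathlib

abbrev Word := List (Fin 3)
abbrev InfWord := ℕ → Fin 3

/-- `u` is a (finite, contiguous) factor of the infinite word `w`. -/
def IsFactor (w : InfWord) (u : Word) : Prop :=
  ∃ i : ℕ, u = (List.range u.length).map fun k => w (i + k)

/-- `u` is a prefix of the infinite word `z`. -/
def IsPrefixInf (u : Word) (z : InfWord) : Prop :=
  u = (List.range u.length).map z

/-- `p` is a period of the finite word `w`. -/
def HasPeriod (w : Word) (p : ℕ) : Prop :=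
  0 < p ∧ p ≤ w.length ∧ ∀ i : ℕ, i + p < w.length → w.getD (i + p) 0 = w.getD i 0

/-- The infinite word `w` is `α`-power-free: it has no nonempty factor `u`
with a period `p` satisfying `|u|/p ≥ α`. -/
def PowerFree (α : ℚ) (w : InfWord) : Prop :=
  ∀ (u : Word) (p : ℕ), IsFactor w u → u ≠ [] → HasPeriod u p →
    (u.length : ℚ) / (p : ℚ) < α

/-- The set of palindromic factors of a finite word. -/
def palSet (w : Word) : Set Word := {u | u <:+: w ∧ u.reverse = u}

/-- A finite word of length `n` is rich if it has exactly `n + 1`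
distinct palindromic factors (including the empty word). -/
def RichWord (w : Word) : Prop := (palSet w).ncard = w.length + 1

/-- An infinite word is rich if all of its finite factors are rich. -/
def RichSeq (z : InfWord) : Prop := ∀ u : Word, IsFactor z u → RichWord u

def fm : Fin 3 → Word := ![[0, 1], [0, 2, 2], [0, 2]]
def gm : Fin 3 → Word := ![[2, 0], [2, 1], [2]]
def t1 : Fin 3 → Word :=
  ![[0, 0, 1], [0, 0, 1, 0, 1, 1, 0, 1],
    [0, 0, 1, 0, 1, 1, 0, 1, 0, 0, 1, 0, 1, 1, 0, 1]]
def t2 : Fin 3 → Word :=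
  ![[0, 0, 2], [0, 0, 2, 0, 2, 2, 0, 2],
    [0, 0, 2, 0, 2, 2, 0, 2, 0, 0, 2, 0, 2, 2, 0, 2]]

/-- The morphism `f` on finite words. -/
def fList (w : Word) : Word := w.flatMap fm
/-- The morphism `g` on finite words. -/
def gList (w : Word) : Word := w.flatMap gm

def tauAux : Bool → Word → Word
  | _, [] => []
  | b, a :: w => (if b then t1 a else t2 a) ++ tauAux (!b) w

/-- The transducer `τ` on finite words: `t1` is applied to even-indexed letters
and `t2` to odd-indexed letters. -/
def tauList (w : Word) : Word := tauAux true w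

/-- The morphism `f` on infinite words. -/
def fInf (x : InfWord) : InfWord :=
  fun i => (fList ((List.range (i + 1)).map x)).getD i 0
/-- The morphism `g` on infinite words. -/
def gInf (x : InfWord) : InfWord :=
  fun i => (gList ((List.range (i + 1)).map x)).getD i 0
/-- The transducer `τ` on infinite words. -/
def tauInf (x : InfWord) : InfWord :=
  fun i => (tauList ((List.range (i + 1)).map x)).getD i 0

/-- The critical exponent of an infinite word. -/
noncomputable def criticalExponent (z : InfWord) : ℝ :=
  sSup {r : ℝ | ∃ (u : Word) (p : ℕ), IsFactor z u ∧ u ≠ [] ∧ HasPeriod u p ∧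
    r = (u.length : ℝ) / (p : ℝ)}
/-- The sister map exchanges the letters `1` and `2`. -/
def sister : Fin 3 → Fin 3 := ![0, 2, 1]


/-!
Since `f²(0) = 0102·2` and `f(2) = 0·2`, for every `m` the prefix `f^(m+3)(0)` of
`x = f^ω(0)` begins with `Q · P`, where `Q = f^(m+1)(0102)` and `P = f^m(0)`; so `P` occurs in
`x` both at the start and right after `Q`. The morphism `f` preserves the parity of the number of
`2`s and `|g(w)|` has the parity of that number, so `g(P)` occurs in `g(x)` at the start and at
the odd position `|g(Q)|`. The transducer `τ` read from an odd position swaps the roles of `t₁`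
and `t₂`, which is exactly the sister map; hence the sister of the prefix `τ(g(P))` of `z` occurs
in `z`. These prefixes are arbitrarily long and every factor of `z` lies inside a long enough
prefix.
-/

def suffixFrom (z : InfWord) (s : ℕ) : InfWord := fun k => z (s + k)

section InfiniteWords

variable {z : InfWord} {u v w : Word}

lemma suffixFrom_suffixFrom (z : InfWord) (a b : ℕ) :
    suffixFrom (suffixFrom z a) b = suffixFrom z (a + b) := by
  funext k
  simp only [suffixFrom, Nat.add_assoc]

lemma isFactor_iff_exists_isPrefixInf : IsFactor z u ↔ ∃ i, IsPrefixInf u (suffixFrom z i) :=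
  Iff.rfl

lemma isPrefixInf_iff_getElem : IsPrefixInf u z ↔ ∀ j (h : j < u.length), u[j] = z j := by
  refine ⟨fun h j hj => ?_,
    fun h => List.ext_getElem (by simp) fun j h₁ _ => by simpa using h j h₁⟩
  rw [List.getElem_of_eq h hj]
  simp

lemma isPrefixInf_range_map (z : InfWord) (n : ℕ) : IsPrefixInf ((List.range n).map z) z := by
  simp [IsPrefixInf]

lemma isPrefixInf_append :
    IsPrefixInf (u ++ v) z ↔ IsPrefixInf u z ∧ IsPrefixInf v (suffixFrom z u.length) := by
  have hsplit : (List.range (u ++ v).length).map z =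
      (List.range u.length).map z ++ (List.range v.length).map (suffixFrom z u.length) := by
    simp only [List.length_append, List.range_add, List.map_append, List.map_map]
    rfl
  unfold IsPrefixInf
  rw [hsplit]
  exact ⟨fun h => List.append_inj h (by simp), fun ⟨hu, hv⟩ => by rw [← hu, ← hv]⟩

lemma IsPrefixInf.prefix_of_length_le (hu : IsPrefixInf u z) (hv : IsPrefixInf v z)
    (h : u.length ≤ v.length) : u <+: v := by
  rw [List.prefix_iff_eq_take, hv, hu, ← List.map_take, List.take_range]
  simp [Nat.min_eq_left h]

lemma IsFactor.of_infix (h : u <:+: w) (hw : IsFactor z w) : IsFactor z u := by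
  obtain ⟨s, t, rfl⟩ := h
  obtain ⟨i, hi⟩ := isFactor_iff_exists_isPrefixInf.1 hw
  obtain ⟨⟨-, hu⟩, -⟩ := isPrefixInf_append.1 hi |>.imp_left isPrefixInf_append.1
  rw [suffixFrom_suffixFrom] at hu
  exact ⟨_, hu⟩

/-- A factor at position `i` sits inside every prefix of length at least `i + |u|`. -/
lemma IsFactor.map_of_forall_exists_prefix (φ : Fin 3 → Fin 3)
    (h : ∀ n, ∃ w : Word, n ≤ w.length ∧ IsPrefixInf w z ∧ IsFactor z (w.map φ))
    (hu : IsFactor z u) : IsFactor z (u.map φ) := by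
  obtain ⟨i, hi⟩ := isFactor_iff_exists_isPrefixInf.1 hu
  obtain ⟨w, hlen, hw, hφw⟩ := h (i + u.length)
  have hpre : IsPrefixInf ((List.range i).map z ++ u) z :=
    isPrefixInf_append.2
      ⟨isPrefixInf_range_map z i, by rwa [List.length_map, List.length_range]⟩
  obtain ⟨t, ht⟩ := hpre.prefix_of_length_le hw (by simpa using hlen)
  exact hφw.of_infix (List.IsInfix.map φ ⟨_, t, ht⟩)

end InfiniteWords

/-- `fInf`, `gInf` and `tauInf` are, by definition, `infExtension` of `fList`, `gList`,
`tauList`. -/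
def infExtension (F : Word → Word) (y : InfWord) : InfWord :=
  fun i => (F ((List.range (i + 1)).map y)).getD i 0

lemma IsPrefixInf.apply_infExtension {F : Word → Word}
    (hmono : ∀ {u v : Word}, u <+: v → F u <+: F v)
    (hlen : ∀ v : Word, v.length ≤ (F v).length) {y : InfWord} {w : Word}
    (hw : IsPrefixInf w y) : IsPrefixInf (F w) (infExtension F y) := by
  rw [isPrefixInf_iff_getElem]
  intro j hj
  set p := (List.range (j + 1)).map y
  have hp : IsPrefixInf p y := isPrefixInf_range_map y (j + 1)
  have hjp : j < (F p).length := lt_of_lt_of_le (by simp [p]) (hlen p)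
  rw [infExtension, List.getD_eq_getElem _ _ hjp]
  rcases le_total w.length p.length with h | h
  · exact (hmono (hw.prefix_of_length_le hp h)).getElem hj
  · exact ((hmono (hp.prefix_of_length_le hw h)).getElem hjp).symm

lemma mul_length_le_length_flatMap {α β : Type*} (σ : α → List β) (k : ℕ)
    (hσ : ∀ a, k ≤ (σ a).length) (w : List α) : k * w.length ≤ (w.flatMap σ).length := by
  rw [List.length_flatMap]
  simpa [mul_comm] using
    List.card_nsmul_le_sum (w.map fun a => (σ a).length) k (by simpa using fun a _ => hσ a)

lemma iterate_append {α : Type*} {F : List α → List α} (hF : ∀ v w, F (v ++ w) = F v ++ F w)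
    (k : ℕ) (v w : List α) : F^[k] (v ++ w) = F^[k] v ++ F^[k] w := by
  induction k generalizing v w with
  | zero => rfl
  | succ k ih => simp only [Function.iterate_succ_apply, hF, ih]

lemma fList_append (v w : Word) : fList (v ++ w) = fList v ++ fList w := List.flatMap_append ..

lemma gList_append (v w : Word) : gList (v ++ w) = gList v ++ gList w := List.flatMap_append ..

lemma two_mul_length_le_length_fList (w : Word) : 2 * w.length ≤ (fList w).length :=
  mul_length_le_length_flatMap fm 2 (by decide) w

lemma length_le_length_gList (w : Word) : w.length ≤ (gList w).length :=
  (one_mul w.length).ge.trans (mul_length_le_length_flatMap gm 1 (by decide) w)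

lemma count_two_fList_mod_two (w : Word) : (fList w).count 2 % 2 = w.count 2 % 2 := by
  induction w with
  | nil => rfl
  | cons a w ih =>
    rw [show fList (a :: w) = fm a ++ fList w from rfl, List.count_append, List.count_cons]
    fin_cases a <;> simp [fm] <;> omega

lemma length_gList_mod_two (w : Word) : (gList w).length % 2 = w.count 2 % 2 := by
  induction w with
  | nil => rfl
  | cons a w ih =>
    rw [show gList (a :: w) = gm a ++ gList w from rfl, List.length_append, List.count_cons]
    fin_cases a <;> simp [gm] <;> omega

lemma succ_le_length_fList_iterate_zero (m : ℕ) : m + 1 ≤ (fList^[m] [0]).length := by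
  induction m with
  | zero => decide
  | succ m ih =>
    rw [Function.iterate_succ_apply']
    have := two_mul_length_le_length_fList (fList^[m] [0])
    omega

lemma fList_iterate_zero_eq (m : ℕ) :
    fList^[m + 3] [0] = fList^[m + 1] [0, 1, 0, 2] ++ fList^[m] [0] ++ fList^[m] [2] := by
  rw [Function.iterate_add_apply fList (m + 1) 2,
    show fList^[2] [0] = ([0, 1, 0, 2] ++ [2] : Word) from rfl, iterate_append fList_append,
    Function.iterate_succ_apply fList m [2], show fList [2] = ([0] ++ [2] : Word) from rfl,
    iterate_append fList_append, List.append_assoc]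

lemma IsPrefixInf.gList_gInf {y : InfWord} {w : Word} (hw : IsPrefixInf w y) :
    IsPrefixInf (gList w) (gInf y) :=
  hw.apply_infExtension (fun h => h.flatMap gm) length_le_length_gList

lemma IsPrefixInf.fList_iterate {x : InfWord} (hfix : fInf x = x) {w : Word}
    (hw : IsPrefixInf w x) (k : ℕ) : IsPrefixInf (fList^[k] w) x :=
  Function.Iterate.rec (fun v => IsPrefixInf v x) hw
    (fun _ hv => hfix ▸ hv.apply_infExtension (F := fList) (fun h => h.flatMap fm)
      fun v => (Nat.le_mul_of_pos_left _ two_pos).trans (two_mul_length_le_length_fList v)) k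

lemma IsPrefixInf.fList_iterate_zero {x : InfWord} (hfix : fInf x = x) (h0 : x 0 = 0) (k : ℕ) :
    IsPrefixInf (fList^[k] [0]) x :=
  IsPrefixInf.fList_iterate hfix (by simp [IsPrefixInf, h0]) k

lemma tauAux_append : ∀ (b : Bool) (w v : Word),
    tauAux b (w ++ v) = tauAux b w ++ tauAux (if w.length % 2 = 0 then b else !b) v
  | b, [], v => by simp [tauAux]
  | b, a :: w, v => by
    have hparity : (if (w.length + 1) % 2 = 0 then b else !b)
        = (if w.length % 2 = 0 then !b else b) := by
      rcases Nat.mod_two_eq_zero_or_one w.length with h | h <;> simp [h, Nat.add_mod]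
    have ih := tauAux_append (!b) w v
    simp only [Bool.not_not] at ih
    simp only [List.cons_append, tauAux, List.length_cons, hparity, ih, List.append_assoc]

lemma length_le_length_tauAux : ∀ (b : Bool) (w : Word), w.length ≤ (tauAux b w).length
  | b, [] => by simp [tauAux]
  | b, a :: w => by
    have hblock : 1 ≤ (if b then t1 a else t2 a).length := by cases b <;> fin_cases a <;> decide
    have := length_le_length_tauAux (!b) w
    simp only [tauAux, List.length_append, List.length_cons]
    omega

/-- `t₂` is the sister of `t₁`. -/
lemma map_sister_tauAux : ∀ (b : Bool) (w : Word), (tauAux b w).map sister = tauAux (!b) w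
  | b, [] => by simp [tauAux]
  | b, a :: w => by
    have hblock : (if b then t1 a else t2 a).map sister = if !b then t1 a else t2 a := by
      cases b <;> fin_cases a <;> decide
    simp only [tauAux, List.map_append, hblock, map_sister_tauAux (!b) w, Bool.not_not]

lemma IsPrefixInf.tauList_tauInf {y : InfWord} {w : Word} (hw : IsPrefixInf w y) :
    IsPrefixInf (tauList w) (tauInf y) :=
  hw.apply_infExtension (F := tauList)
    (fun ⟨t, ht⟩ => ht ▸ ⟨_, (tauAux_append true _ t).symm⟩)
    (length_le_length_tauAux true)

lemma isFactor_map_sister_tauList {y : InfWord} {v : Word} {q : ℕ} (hq : q % 2 = 1)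
    (hv : IsPrefixInf v (suffixFrom y q)) : IsFactor (tauInf y) ((tauList v).map sister) := by
  have hpre : IsPrefixInf ((List.range q).map y ++ v) y :=
    isPrefixInf_append.2 ⟨isPrefixInf_range_map y q, by simpa using hv⟩
  have himage := hpre.tauList_tauInf
  rw [tauList, tauAux_append] at himage
  simp only [List.length_map, List.length_range, hq] at himage
  rw [tauList, map_sister_tauAux]
  exact ⟨_, (isPrefixInf_append.1 himage).2⟩

lemma isFactor_map_sister_tauList_gList {x : InfWord} (hfix : fInf x = x) (h0 : x 0 = 0)
    (m : ℕ) : IsFactor (tauInf (gInf x)) ((tauList (gList (fList^[m] [0]))).map sister) := by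
  have hx := IsPrefixInf.fList_iterate_zero hfix h0 (m + 3)
  rw [fList_iterate_zero_eq] at hx
  have hQP := (isPrefixInf_append.1 hx).1.gList_gInf
  rw [gList_append] at hQP
  have hQ_odd : (gList (fList^[m + 1] [0, 1, 0, 2])).length % 2 = 1 := by
    rw [length_gList_mod_two]
    exact Function.Iterate.rec (fun w : Word => w.count 2 % 2 = 1) (by decide)
      (fun w hw => (count_two_fList_mod_two w).trans hw) (m + 1)
  exact isFactor_map_sister_tauList hQ_odd (isPrefixInf_append.1 hQP).2

/-- If `u` is a factor of `z = τ(g(f^ω(0)))`, then so is its sister. -/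
theorem sister_occurs (x : InfWord) (hfix : fInf x = x) (h0 : x 0 = 0)
    (u : Word) (hu : IsFactor (tauInf (gInf x)) u) :
    IsFactor (tauInf (gInf x)) (u.map sister) := by
  refine hu.map_of_forall_exists_prefix sister fun n => ?_
  set P : Word := fList^[n] [0]
  refine ⟨tauList (gList P), ?_, ?_, isFactor_map_sister_tauList_gList hfix h0 n⟩
  · calc n ≤ P.length := Nat.le_of_succ_le (succ_le_length_fList_iterate_zero n)
      _ ≤ (gList P).length := length_le_length_gList P
      _ ≤ (tauList (gList P)).length := length_le_length_tauAux true _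
  · exact (IsPrefixInf.fList_iterate_zero hfix h0 n).gList_gInf.tauList_tauInf
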